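/- arXiv:1403.4689 — 4 statements merged into one kernel-verified Lean document; each statement's English description precedes it below -/
import Mathlib

section
/- The function h(y) = θ e^y + y²/(2σ²) − k y (for θ > 0, σ > 0, k ≥ 0 real) is strictly convex on ℝ, attains its minimum at y₀ = kσ² − w where w = W(θσ² e^{kσ²}) and W is the Lambert W function, and the minimum value is h(y₀) = w²/(2σ²) + w/σ² − σ²k²/2. -/
/-!
Strict convexity is inherited from `exp`, since `y²/(2σ²)` is convex and `ky` is linear. The
derivative `θeʸ + y/σ² − k` vanishes at `y₀ = kσ² − w` because the defining equation of `w`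
gives `θ e^{y₀} = w/σ²`; a critical point of a convex function is a global minimum, and
substituting `θ e^{y₀} = w/σ²` into `h(y₀)` gives the minimum value.
-/

open Real Set

theorem StrictConvexOn.const_mul {s : Set ℝ} {f : ℝ → ℝ} {c : ℝ} (hc : 0 < c)
    (hf : StrictConvexOn ℝ s f) : StrictConvexOn ℝ s fun x => c * f x := by
  refine ⟨hf.1, fun x hx y hy hxy a b ha hb hab => ?_⟩
  have := mul_lt_mul_of_pos_left (hf.2 hx hy hxy ha hb hab) hc
  simp only [smul_eq_mul] at this ⊢
  linarith

theorem ConvexOn.isMinOn_of_hasDerivAt_eq_zero {S : Set ℝ} {f : ℝ → ℝ} {x : ℝ}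
    (hf : ConvexOn ℝ S f) (hx : x ∈ interior S) (hf' : HasDerivAt f 0 x) : IsMinOn f S x :=
  hf.isMinOn_of_rightDeriv_eq_zero hx (hf'.hasDerivWithinAt.derivWithin (uniqueDiffWithinAt_Ioi x))

section

noncomputable def expQuad (θ σ k : ℝ) (y : ℝ) : ℝ := θ * exp y + y ^ 2 / (2 * σ ^ 2) - k * y

variable {θ σ k : ℝ}

theorem strictConvexOn_expQuad (hθ : 0 < θ) : StrictConvexOn ℝ univ (expQuad θ σ k) := by
  have hsq : ConvexOn ℝ univ fun y : ℝ => y ^ 2 / (2 * σ ^ 2) := by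
    simpa only [smul_eq_mul, div_eq_inv_mul] using
      (even_two.convexOn_pow (𝕜 := ℝ)).smul (inv_nonneg.2 (by positivity : (0 : ℝ) ≤ 2 * σ ^ 2))
  exact ((strictConvexOn_exp.const_mul hθ).add_convexOn hsq).sub_concaveOn
    ((LinearMap.mul ℝ ℝ k).concaveOn convex_univ)

theorem hasDerivAt_expQuad (hσ : σ ≠ 0) (y : ℝ) :
    HasDerivAt (expQuad θ σ k) (θ * exp y + y / σ ^ 2 - k) y := by
  have hsq : HasDerivAt (fun y : ℝ => y ^ 2 / (2 * σ ^ 2)) (y / σ ^ 2) y := by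
    refine ((hasDerivAt_pow 2 y).div_const (2 * σ ^ 2)).congr_deriv ?_
    field_simp
    norm_num
  exact (((hasDerivAt_exp y).const_mul θ).add hsq).sub (by simpa using (hasDerivAt_id y).const_mul k)

theorem mul_exp_sub_eq_div {w : ℝ} (hσ : σ ≠ 0)
    (hW : w * exp w = θ * σ ^ 2 * exp (k * σ ^ 2)) :
    θ * exp (k * σ ^ 2 - w) = w / σ ^ 2 := by
  rw [exp_sub, eq_div_iff (pow_ne_zero 2 hσ), ← mul_right_cancel_iff_of_pos (exp_pos w)]
  field_simp
  linarith

end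

theorem h_strict_convex_min_general (θ σ k w : ℝ) (hθ : 0 < θ) (hσ : 0 < σ)
    (hW : w * Real.exp w = θ * σ ^ 2 * Real.exp (k * σ ^ 2)) :
    StrictConvexOn ℝ univ
      (fun y : ℝ => θ * Real.exp y + y ^ 2 / (2 * σ ^ 2) - k * y) ∧
    IsMinOn (fun y : ℝ => θ * Real.exp y + y ^ 2 / (2 * σ ^ 2) - k * y) univ
      (k * σ ^ 2 - w) ∧
    θ * Real.exp (k * σ ^ 2 - w) + (k * σ ^ 2 - w) ^ 2 / (2 * σ ^ 2) - k * (k * σ ^ 2 - w)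
      = w ^ 2 / (2 * σ ^ 2) + w / σ ^ 2 - σ ^ 2 * k ^ 2 / 2 := by
  have hσ0 : σ ≠ 0 := hσ.ne'
  have hconv : StrictConvexOn ℝ univ (expQuad θ σ k) := strictConvexOn_expQuad hθ
  have hexp := mul_exp_sub_eq_div hσ0 hW
  have hcrit : HasDerivAt (expQuad θ σ k) 0 (k * σ ^ 2 - w) := by
    refine (hasDerivAt_expQuad hσ0 (k * σ ^ 2 - w)).congr_deriv ?_
    rw [hexp]
    field_simp
    ring
  refine ⟨hconv, hconv.convexOn.isMinOn_of_hasDerivAt_eq_zero (by simp) hcrit, ?_⟩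
  rw [hexp]
  field_simp
  ring

/-- The function h(y) = θe^y + y²/(2σ²) − ky is strictly convex on ℝ, attains
its minimum at y₀ = kσ² − w where w = W(θσ² e^{kσ²}) (Lambert W, characterized
by w > 0 and w e^w = θσ² e^{kσ²}), with minimum value w²/(2σ²) + w/σ² − σ²k²/2. -/
theorem h_strict_convex_min (θ σ k w : ℝ) (hθ : 0 < θ) (hσ : 0 < σ) (hk : 0 ≤ k)
    (hw : 0 < w) (hW : w * Real.exp w = θ * σ ^ 2 * Real.exp (k * σ ^ 2)) :
    StrictConvexOn ℝ univ
      (fun y : ℝ => θ * Real.exp y + y ^ 2 / (2 * σ ^ 2) - k * y) ∧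
    IsMinOn (fun y : ℝ => θ * Real.exp y + y ^ 2 / (2 * σ ^ 2) - k * y) univ
      (k * σ ^ 2 - w) ∧
    θ * Real.exp (k * σ ^ 2 - w) + (k * σ ^ 2 - w) ^ 2 / (2 * σ ^ 2) - k * (k * σ ^ 2 - w)
      = w ^ 2 / (2 * σ ^ 2) + w / σ ^ 2 - σ ^ 2 * k ^ 2 / 2 :=
  h_strict_convex_min_general θ σ k w hθ hσ hW
end

section
/- Let w = W(θσ² e^{−σ²}) and m = w/(θσ²). Then for x > 0, the tilted lognormal density evaluated at mx satisfies f(mx) e^{−θ m x} proportional (in x, with constant depending only on θ, σ) to x^{w/σ²} e^{−(w/σ²) x} e^{−(log x)²/(2σ²)}; in particular the tilted density of X/m is dominated by a Gamma(w/σ² + 1, w/σ²) density times a constant, with acceptance function e^{−(log x)²/(2σ²)} ≤ 1. -/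
open Real

/-!
Writing the Lambert equation as `w / (θσ²) = exp (-(w + σ²))` gives `log m = -(w + σ²)`.
Expanding the square in the lognormal exponent at `m x` splits off a constant, the power
`x ^ (-log m / σ² - 1) = x ^ (w / σ²)` and the factor `exp (-(log x)² / (2σ²))`, while the tilt
contributes `exp (-θ m x) = exp (-(w / σ²) x)`.
-/

noncomputable def lognormalPDF (σ y : ℝ) : ℝ :=
  1 / (y * σ * √(2 * π)) * exp (-(log y) ^ 2 / (2 * σ ^ 2))

lemma lognormalPDF_pos {σ y : ℝ} (hσ : 0 < σ) (hy : 0 < y) : 0 < lognormalPDF σ y := by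
  unfold lognormalPDF
  positivity

lemma lognormalPDF_mul {σ m x : ℝ} (hm : 0 < m) (hx : 0 < x) :
    lognormalPDF σ (m * x) =
      lognormalPDF σ m * x ^ (-log m / σ ^ 2 - 1) * exp (-(log x) ^ 2 / (2 * σ ^ 2)) := by
  have hpow : x ^ (-log m / σ ^ 2 - 1) = exp (-(log m * log x) / σ ^ 2) / x := by
    rw [rpow_sub hx, rpow_one, rpow_def_of_pos hx]
    ring_nf
  have hsq : -(log m + log x) ^ 2 / (2 * σ ^ 2) =
      -(log m) ^ 2 / (2 * σ ^ 2) + -(log m * log x) / σ ^ 2 + -(log x) ^ 2 / (2 * σ ^ 2) := by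
    ring
  simp only [lognormalPDF, hpow, log_mul hm.ne' hx.ne', hsq, exp_add]
  field_simp

lemma exp_neg_sq_div_le_one (a σ : ℝ) : exp (-a ^ 2 / (2 * σ ^ 2)) ≤ 1 :=
  exp_le_one_iff.2 (div_nonpos_of_nonpos_of_nonneg (neg_nonpos.2 (sq_nonneg a)) (by positivity))

lemma div_eq_exp_of_mul_exp_eq {w a s : ℝ} (h : w * exp w = a * exp (-s)) (ha : a ≠ 0) :
    w / a = exp (-(w + s)) := by
  rw [div_eq_iff ha]
  calc w = w * exp w * exp (-w) := by rw [mul_assoc, ← exp_add, add_neg_cancel, exp_zero, mul_one]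
    _ = exp (-(w + s)) * a := by rw [h, neg_add, exp_add]; ring

theorem tilted_lognormal_gamma_domination_general (σ θ w : ℝ) (hσ : 0 < σ) (hθ : 0 < θ)
    (hW : w * Real.exp w = θ * σ ^ 2 * Real.exp (-σ ^ 2)) :
    ∃ c : ℝ, 0 < c ∧
      (∀ x : ℝ, 0 < x →
        (1 / ((w / (θ * σ ^ 2) * x) * σ * Real.sqrt (2 * π)) *
            Real.exp (-(Real.log (w / (θ * σ ^ 2) * x)) ^ 2 / (2 * σ ^ 2))) *
          Real.exp (-θ * (w / (θ * σ ^ 2) * x))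
        = c * (x ^ (w / σ ^ 2) * Real.exp (-(w / σ ^ 2) * x) *
            Real.exp (-(Real.log x) ^ 2 / (2 * σ ^ 2)))) ∧
      (∀ x : ℝ, 0 < x → Real.exp (-(Real.log x) ^ 2 / (2 * σ ^ 2)) ≤ 1) ∧
      (∀ x : ℝ, 0 < x →
        (1 / ((w / (θ * σ ^ 2) * x) * σ * Real.sqrt (2 * π)) *
            Real.exp (-(Real.log (w / (θ * σ ^ 2) * x)) ^ 2 / (2 * σ ^ 2))) *
          Real.exp (-θ * (w / (θ * σ ^ 2) * x))
        ≤ c * (x ^ (w / σ ^ 2) * Real.exp (-(w / σ ^ 2) * x))) := by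
  set m := w / (θ * σ ^ 2) with hm_def
  have hm : m = exp (-(w + σ ^ 2)) := div_eq_exp_of_mul_exp_eq hW (by positivity)
  have hm_pos : 0 < m := hm ▸ exp_pos _
  have htilt : -θ * m = -(w / σ ^ 2) := by
    rw [hm_def]
    field_simp
  have hshape : -log m / σ ^ 2 - 1 = w / σ ^ 2 := by
    rw [hm, log_exp]
    field_simp
    ring
  have hfactor : ∀ x : ℝ, 0 < x →
      lognormalPDF σ (m * x) * exp (-θ * (m * x)) =
        lognormalPDF σ m * (x ^ (w / σ ^ 2) * exp (-(w / σ ^ 2) * x) *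
          exp (-(log x) ^ 2 / (2 * σ ^ 2))) := fun x hx => by
    rw [lognormalPDF_mul hm_pos hx, hshape, ← mul_assoc, htilt]
    ring
  refine ⟨lognormalPDF σ m, lognormalPDF_pos hσ hm_pos, hfactor,
    fun x _ => exp_neg_sq_div_le_one _ σ, fun x hx => ?_⟩
  refine (hfactor x hx).trans_le (mul_le_mul_of_nonneg_left
    (mul_le_of_le_one_right (by positivity) (exp_neg_sq_div_le_one _ σ))
    (lognormalPDF_pos hσ hm_pos).le)

/-- With w = W(θσ² e^{−σ²}) and m = w/(θσ²), for x > 0 the tilted lognormal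
density at mx is proportional to x^{w/σ²} e^{−(w/σ²)x} e^{−(log x)²/(2σ²)};
in particular it is dominated by a constant times the Gamma(w/σ²+1, w/σ²)
density kernel, with acceptance function e^{−(log x)²/(2σ²)} ≤ 1. -/
theorem tilted_lognormal_gamma_domination (σ θ w : ℝ) (hσ : 0 < σ) (hθ : 0 < θ)
    (hw : 0 < w) (hW : w * Real.exp w = θ * σ ^ 2 * Real.exp (-σ ^ 2)) :
    ∃ c : ℝ, 0 < c ∧
      (∀ x : ℝ, 0 < x →
        (1 / ((w / (θ * σ ^ 2) * x) * σ * Real.sqrt (2 * π)) *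
            Real.exp (-(Real.log (w / (θ * σ ^ 2) * x)) ^ 2 / (2 * σ ^ 2))) *
          Real.exp (-θ * (w / (θ * σ ^ 2) * x))
        = c * (x ^ (w / σ ^ 2) * Real.exp (-(w / σ ^ 2) * x) *
            Real.exp (-(Real.log x) ^ 2 / (2 * σ ^ 2)))) ∧
      (∀ x : ℝ, 0 < x → Real.exp (-(Real.log x) ^ 2 / (2 * σ ^ 2)) ≤ 1) ∧
      (∀ x : ℝ, 0 < x →
        (1 / ((w / (θ * σ ^ 2) * x) * σ * Real.sqrt (2 * π)) *
            Real.exp (-(Real.log (w / (θ * σ ^ 2) * x)) ^ 2 / (2 * σ ^ 2))) *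
          Real.exp (-θ * (w / (θ * σ ^ 2) * x))
        ≤ c * (x ^ (w / σ ^ 2) * Real.exp (-(w / σ ^ 2) * x))) :=
  tilted_lognormal_gamma_domination_general σ θ w hσ hθ hW
end

section
/- The acceptance probability of the Gamma-proposal rejection sampler equals E[e^{−(log Z)²/(2σ²)}] = (α^{α+1}/Γ(α+1)) √(2π) σ exp{σ²(α+1)²/2} · L(α e^{σ²(α+1)}), where Z ~ Gamma(α+1, α), α = W(θσ² e^{−σ²})/σ², and L is the Laplace transform of the Lognormal(0,σ²) distribution. -/
open Real Set MeasureTheory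

/-!
Substitute `z = e^c x` with `c = σ²(α + 1)`. Then `log z = c + log x`, and completing the square
in `log x` turns `e^c · e^{-(log z)²/(2σ²)} · z^α` into `√(2π) σ e^{σ²(α+1)²/2}` times the
lognormal density at `x`, while `e^{-α z} = e^{-(α e^c) x}` is the Laplace kernel at `s = α e^c`.
-/

noncomputable def lognormalDensity (σ x : ℝ) : ℝ :=
  1 / (x * σ * √(2 * π)) * exp (-(log x) ^ 2 / (2 * σ ^ 2))

lemma exp_mul_exp_neg_log_sq_mul_rpow_eq_lognormalDensity {σ : ℝ} (hσ : σ ≠ 0) (α : ℝ)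
    {x : ℝ} (hx : 0 < x) :
    exp (σ ^ 2 * (α + 1)) * (exp (-(log (exp (σ ^ 2 * (α + 1)) * x)) ^ 2 / (2 * σ ^ 2)) *
        (exp (σ ^ 2 * (α + 1)) * x) ^ α)
      = √(2 * π) * σ * exp (σ ^ 2 * (α + 1) ^ 2 / 2) * lognormalDensity σ x := by
  set c := σ ^ 2 * (α + 1)
  have hlog : log (exp c * x) = c + log x := by rw [log_mul (exp_pos c).ne' hx.ne', log_exp]
  have hinv : 1 / (x * σ * √(2 * π)) = exp (-log x) / (σ * √(2 * π)) := by
    rw [exp_neg, exp_log hx]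
    field_simp
  rw [lognormalDensity, hinv, rpow_def_of_pos (by positivity), hlog]
  calc exp c * (exp (-(c + log x) ^ 2 / (2 * σ ^ 2)) * exp ((c + log x) * α))
      = exp (c + -(c + log x) ^ 2 / (2 * σ ^ 2) + (c + log x) * α) := by
        rw [exp_add, exp_add]; ring
    _ = exp (σ ^ 2 * (α + 1) ^ 2 / 2 + -log x + -log x ^ 2 / (2 * σ ^ 2)) := by
        congr 1; field_simp; ring
    _ = √(2 * π) * σ * exp (σ ^ 2 * (α + 1) ^ 2 / 2) *
          (exp (-log x) / (σ * √(2 * π)) * exp (-log x ^ 2 / (2 * σ ^ 2))) := by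
        rw [exp_add, exp_add]; field_simp

theorem acceptance_probability_formula_general (σ w : ℝ) (hσ : 0 < σ)
    (L : ℝ → ℝ)
    (hL : ∀ s : ℝ, L s = ∫ x in Ioi (0 : ℝ), Real.exp (-s * x) *
      (1 / (x * σ * Real.sqrt (2 * π)) * Real.exp (-(Real.log x) ^ 2 / (2 * σ ^ 2)))) :
    (∫ z in Ioi (0 : ℝ), Real.exp (-(Real.log z) ^ 2 / (2 * σ ^ 2)) *
        ((w / σ ^ 2) ^ (w / σ ^ 2 + 1) * z ^ (w / σ ^ 2) * Real.exp (-(w / σ ^ 2) * z) /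
          Real.Gamma (w / σ ^ 2 + 1)))
      = (w / σ ^ 2) ^ (w / σ ^ 2 + 1) / Real.Gamma (w / σ ^ 2 + 1) *
          (Real.sqrt (2 * π) * σ) *
          Real.exp (σ ^ 2 * (w / σ ^ 2 + 1) ^ 2 / 2) *
          L (w / σ ^ 2 * Real.exp (σ ^ 2 * (w / σ ^ 2 + 1))) := by
  set α := w / σ ^ 2
  set c := σ ^ 2 * (α + 1)
  have hsubst := integral_comp_mul_left_Ioi' (fun z => exp (-(log z) ^ 2 / (2 * σ ^ 2)) *
    (α ^ (α + 1) * z ^ α * exp (-α * z) / Gamma (α + 1))) 0 (exp_pos c)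
  rw [mul_zero, smul_eq_mul] at hsubst
  rw [← hsubst, hL, ← integral_const_mul, ← integral_const_mul]
  refine setIntegral_congr_fun measurableSet_Ioi fun x hx => ?_
  have hkernel := exp_mul_exp_neg_log_sq_mul_rpow_eq_lognormalDensity hσ.ne' α hx
  rw [lognormalDensity] at hkernel
  rw [show -(α * exp c) * x = -α * (exp c * x) by ring]
  linear_combination (α ^ (α + 1) * exp (-α * (exp c * x)) / Gamma (α + 1)) * hkernel

/-- The acceptance probability of the Gamma-proposal rejection sampler:
E[e^{−(log Z)²/(2σ²)}] for Z ~ Gamma(α+1, α), α = W(θσ² e^{−σ²})/σ², equals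
(α^{α+1}/Γ(α+1)) √(2π) σ e^{σ²(α+1)²/2} L(α e^{σ²(α+1)}), where L is the
Laplace transform of the Lognormal(0,σ²) distribution. -/
theorem acceptance_probability_formula (σ θ w : ℝ) (hσ : 0 < σ) (hθ : 0 < θ)
    (hw : 0 < w) (hW : w * Real.exp w = θ * σ ^ 2 * Real.exp (-σ ^ 2))
    (L : ℝ → ℝ)
    (hL : ∀ s : ℝ, L s = ∫ x in Ioi (0 : ℝ), Real.exp (-s * x) *
      (1 / (x * σ * Real.sqrt (2 * π)) * Real.exp (-(Real.log x) ^ 2 / (2 * σ ^ 2)))) :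
    (∫ z in Ioi (0 : ℝ), Real.exp (-(Real.log z) ^ 2 / (2 * σ ^ 2)) *
        ((w / σ ^ 2) ^ (w / σ ^ 2 + 1) * z ^ (w / σ ^ 2) * Real.exp (-(w / σ ^ 2) * z) /
          Real.Gamma (w / σ ^ 2 + 1)))
      = (w / σ ^ 2) ^ (w / σ ^ 2 + 1) / Real.Gamma (w / σ ^ 2 + 1) *
          (Real.sqrt (2 * π) * σ) *
          Real.exp (σ ^ 2 * (w / σ ^ 2 + 1) ^ 2 / 2) *
          L (w / σ ^ 2 * Real.exp (σ ^ 2 * (w / σ ^ 2 + 1))) :=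
  acceptance_probability_formula_general σ w hσ L hL
end

section
/- With γ(x) as above and θ̃(x) = γ(x) e^{γ(x)}/σ², the approximate saddlepoint satisfies θ̃(x) ~ −log x/(x σ²) as x → 0⁺, i.e., x σ² θ̃(x)/|log x| → 1. -/
open Real Set Filter Topology

/-!
Put `L = -log x → ∞` and `δ = √((1 + L)² + 2σ²) - (1 + L)`. Then `γ = L + δ / 2` and
`x e^γ = e^{δ / 2}`, so the ratio equals `(1 + δ / (2L)) e^{δ / 2}`; it tends to `1` because
`δ = 2σ² / (√((1 + L)² + 2σ²) + (1 + L)) → 0`.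
-/

theorem tendsto_sqrt_sq_add_sub_atTop (c : ℝ) :
    Tendsto (fun u : ℝ => √(u ^ 2 + c) - u) atTop (𝓝 0) := by
  have hsq : Tendsto (fun u : ℝ => u ^ 2 + c) atTop atTop :=
    tendsto_atTop_add_const_right _ c (tendsto_pow_atTop two_ne_zero)
  have hsum : Tendsto (fun u : ℝ => √(u ^ 2 + c) + u) atTop atTop :=
    (tendsto_sqrt_atTop.comp hsq).atTop_add_atTop tendsto_id
  refine (tendsto_const_nhds (x := c).div_atTop hsum).congr' ?_
  filter_upwards [hsum.eventually_gt_atTop 0, hsq.eventually_ge_atTop 0] with u hpos hnonneg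
  rw [div_eq_iff hpos.ne']
  linear_combination -sq_sqrt hnonneg

theorem mul_saddlepoint_div_abs_log {σ x : ℝ} (s : ℝ) (hσ : σ ≠ 0) (hx : 0 < x) (hx1 : x < 1) :
    x * σ ^ 2 * ((-1 - log x + s) / 2 * exp ((-1 - log x + s) / 2) / σ ^ 2) / |log x| =
      (1 + (s - (1 - log x)) / (2 * -log x)) * exp ((s - (1 - log x)) / 2) := by
  have hlog : log x < 0 := log_neg hx hx1
  have hexp : x * exp ((-1 - log x + s) / 2) = exp ((s - (1 - log x)) / 2) := by
    rw [← exp_log hx, ← exp_add, exp_log hx]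
    ring_nf
  rw [abs_of_neg hlog, ← hexp]
  field_simp [hlog.ne]
  ring

/-- With γ(x) = (−1 − log x + √((1 − log x)² + 2σ²))/2 and
θ̃(x) = γ(x)e^{γ(x)}/σ², the approximate saddlepoint satisfies
θ̃(x) ~ −log x/(xσ²) as x → 0⁺, i.e. xσ²θ̃(x)/|log x| → 1. -/
theorem approx_saddlepoint_asymptotic (σ : ℝ) (hσ : 0 < σ) :
    Tendsto (fun x : ℝ =>
        x * σ ^ 2 *
          ((-1 - Real.log x + Real.sqrt ((1 - Real.log x) ^ 2 + 2 * σ ^ 2)) / 2 *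
            Real.exp ((-1 - Real.log x + Real.sqrt ((1 - Real.log x) ^ 2 + 2 * σ ^ 2)) / 2) /
            σ ^ 2) / |Real.log x|)
      (nhdsWithin 0 (Ioi 0)) (nhds 1) := by
  have hL : Tendsto (fun x : ℝ => -log x) (𝓝[>] 0) atTop :=
    tendsto_neg_atBot_atTop.comp tendsto_log_nhdsGT_zero
  have hu : Tendsto (fun x : ℝ => 1 - log x) (𝓝[>] 0) atTop := by
    simpa only [sub_eq_add_neg] using tendsto_atTop_add_const_left _ 1 hL
  have hδ : Tendsto (fun x : ℝ => √((1 - log x) ^ 2 + 2 * σ ^ 2) - (1 - log x))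
      (𝓝[>] 0) (𝓝 0) :=
    (tendsto_sqrt_sq_add_sub_atTop (2 * σ ^ 2)).comp hu
  have hfactor : Tendsto (fun x : ℝ => 1 + (√((1 - log x) ^ 2 + 2 * σ ^ 2) - (1 - log x)) /
      (2 * -log x)) (𝓝[>] 0) (𝓝 1) := by
    simpa using tendsto_const_nhds.add (hδ.div_atTop (hL.const_mul_atTop two_pos))
  have hexp := (hδ.div_const 2).rexp
  rw [zero_div, exp_zero] at hexp
  have hprod := hfactor.mul hexp
  rw [one_mul] at hprod
  refine hprod.congr' ?_
  filter_upwards [Ioo_mem_nhdsGT one_pos] with x hx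
  exact (mul_saddlepoint_div_abs_log _ hσ.ne' hx.1 hx.2).symm
end
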